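/- The real number α defined as the largest real root of x³ - 6x² + 5x - 1 is a Pisot unit, and α = b² where b = 1/(2cos(3π/7)) is the Pisot number satisfying b³ - 2b² - b + 1 = 0. -/

import Mathlib

noncomputable def b7 : ℝ := 1 / (2 * Real.cos (3 * Real.pi / 7))

/-!
Since `4θ + 3θ = 3π` for `θ = 3π/7`, `cos(4θ) = -cos(3θ)`; expanding both sides and removing the
factor `cos θ + 1` shows that `cos θ` is a root of `8c³ - 4c² - 4c + 1`, i.e. `b = 1/(2 cos θ)` is a
root of `x³ - 2x² - x + 1`. Squaring the roots of this cubic gives the roots of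
`x³ - 6x² + 5x - 1`, and `b²` is its only root above `5`, so `α = b²`. For the conjugates, divide
each cubic by `x - a` for its real root `a` and apply the Schur–Cohn criterion to the remaining
quadratic `x² + px + q`: both of its roots lie in the open unit disc when `|q| < 1` and
`|p| < 1 + q`.
-/

open Real

theorem isIntegral_of_cubic_eq_zero {A : Type*} [CommRing A] {x : A} (a₂ a₁ a₀ : ℤ)
    (hx : x ^ 3 + a₂ * x ^ 2 + a₁ * x + a₀ = 0) : IsIntegral ℤ x := by
  open Polynomial in
  refine ⟨X ^ 3 + C a₂ * X ^ 2 + C a₁ * X + C a₀, by monicity!, ?_⟩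
  rw [← aeval_def]
  simpa using hx

theorem quadratic_eq_zero_of_cubic_eq_zero {K : Type*} [Field K] {p q r a z : K}
    (ha : a ^ 3 + p * a ^ 2 + q * a + r = 0) (hz : z ^ 3 + p * z ^ 2 + q * z + r = 0)
    (hne : z ≠ a) : z ^ 2 + (a + p) * z + (a ^ 2 + p * a + q) = 0 := by
  have hfactor : (z - a) * (z ^ 2 + (a + p) * z + (a ^ 2 + p * a + q)) = 0 := by
    linear_combination hz - ha
  exact (mul_eq_zero.1 hfactor).resolve_left (sub_ne_zero.2 hne)

theorem Complex.norm_lt_one_of_sq_add_mul_add_eq_zero {p q : ℝ} (hq : |q| < 1)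
    (hp : |p| < 1 + q) {z : ℂ} (hz : z ^ 2 + p * z + q = 0) : ‖z‖ < 1 := by
  obtain ⟨hq₁, hq₂⟩ := abs_lt.1 hq
  obtain ⟨hp₁, hp₂⟩ := abs_lt.1 hp
  have hre : z.re ^ 2 - z.im ^ 2 + p * z.re + q = 0 := by
    simpa [pow_two] using congrArg Complex.re hz
  have him : z.im * (2 * z.re + p) = 0 := by
    have him_eq := congrArg Complex.im hz
    simp only [pow_two, Complex.add_im, Complex.mul_im, Complex.ofReal_re, Complex.ofReal_im,
      zero_mul, add_zero, Complex.zero_im] at him_eq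
    linear_combination him_eq
  suffices z.re ^ 2 + z.im ^ 2 < 1 by
    rw [← sq_lt_one_iff₀ (norm_nonneg z), Complex.sq_norm, Complex.normSq_apply]
    nlinarith
  rcases mul_eq_zero.1 him with hreal | hvertex
  · have hlt : z.re < 1 := by
      by_contra! h
      nlinarith [mul_nonneg (sub_nonneg.2 h) (by linarith : (0 : ℝ) ≤ z.re + 1 + p)]
    have hgt : -1 < z.re := by
      by_contra! h
      nlinarith [mul_nonneg (by linarith : (0 : ℝ) ≤ -1 - z.re)
        (by linarith : (0 : ℝ) ≤ 1 - z.re - p)]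
    rw [hreal]
    nlinarith
  · have hre_eq : z.re = -p / 2 := by linarith
    rw [hre_eq] at hre ⊢
    nlinarith

theorem Complex.norm_lt_one_of_cubic_eq_zero_of_ne {p q r a : ℝ}
    (ha : a ^ 3 + p * a ^ 2 + q * a + r = 0) (hq : |a ^ 2 + p * a + q| < 1)
    (hp : |a + p| < 1 + (a ^ 2 + p * a + q)) {z : ℂ}
    (hz : z ^ 3 + p * z ^ 2 + q * z + r = 0) (hne : z ≠ a) : ‖z‖ < 1 := by
  have haℂ : (a : ℂ) ^ 3 + p * (a : ℂ) ^ 2 + q * a + r = 0 := by exact_mod_cast ha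
  refine norm_lt_one_of_sq_add_mul_add_eq_zero hq hp ?_
  push_cast
  exact quadratic_eq_zero_of_cubic_eq_zero haℂ hz hne

theorem cos_three_pi_div_seven_pos : 0 < cos (3 * π / 7) :=
  cos_pos_of_mem_Ioo ⟨by linarith [pi_pos], by linarith [pi_pos]⟩

theorem cos_three_pi_div_seven_cubic :
    8 * cos (3 * π / 7) ^ 3 - 4 * cos (3 * π / 7) ^ 2
      - 4 * cos (3 * π / 7) + 1 = 0 := by
  set θ := 3 * π / 7 with hθ
  have hcos_four : cos (4 * θ) = -cos (3 * θ) := by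
    rw [show 4 * θ = π - 3 * θ + 2 * π by rw [hθ]; ring, cos_add_two_pi, cos_pi_sub]
  have hquartic : (cos θ + 1) * (8 * cos θ ^ 3 - 4 * cos θ ^ 2
      - 4 * cos θ + 1) = 0 := by
    rw [show 4 * θ = 2 * (2 * θ) by ring, cos_two_mul, cos_two_mul,
      cos_three_mul] at hcos_four
    linear_combination hcos_four
  exact (mul_eq_zero.1 hquartic).resolve_left (by linarith [cos_three_pi_div_seven_pos])

theorem b7_cubic : b7 ^ 3 - 2 * b7 ^ 2 - b7 + 1 = 0 := by
  have hcos := cos_three_pi_div_seven_pos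
  rw [b7]
  field_simp
  linear_combination cos_three_pi_div_seven_cubic

theorem one_lt_b7 : 1 < b7 := by
  have hlt : cos (3 * π / 7) < cos (π / 3) :=
    strictAntiOn_cos ⟨by positivity, by linarith [pi_pos]⟩ ⟨by positivity, by linarith [pi_pos]⟩
      (by linarith [pi_pos])
  rw [cos_pi_div_three] at hlt
  rw [b7, lt_div_iff₀ (by linarith [cos_three_pi_div_seven_pos])]
  linarith

theorem b7_mem_Ioo : b7 ∈ Set.Ioo 2.24 2.25 := by
  have h1 := one_lt_b7
  have h3 := b7_cubic
  constructor
  · by_contra! h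
    nlinarith [mul_pos (sub_pos.2 h1) (sub_pos.2 h1)]
  · by_contra! h
    nlinarith [mul_nonneg (sub_nonneg.2 h) (sub_nonneg.2 h)]

theorem eq_of_cubic_eq_zero_of_five_lt {s t : ℝ} (hs : s ^ 3 - 6 * s ^ 2 + 5 * s - 1 = 0)
    (ht : t ^ 3 - 6 * t ^ 2 + 5 * t - 1 = 0) (h5s : 5 < s) (h5t : 5 < t) : s = t := by
  have hfactor : (s - t) * (s ^ 2 + s * t + t ^ 2 - 6 * s - 6 * t + 5) = 0 := by
    linear_combination hs - ht
  have hpos : 0 < s ^ 2 + s * t + t ^ 2 - 6 * s - 6 * t + 5 := by nlinarith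
  exact sub_eq_zero.1 ((mul_eq_zero.1 hfactor).resolve_right hpos.ne')

/-- The largest real root α of x³-6x²+5x-1 is a Pisot unit, and α = b² where
b = 1/(2cos(3π/7)) is the Pisot number satisfying b³-2b²-b+1 = 0. -/
theorem seven_fold_scaling_pisot_unit (α : ℝ)
    (hroot : α ^ 3 - 6 * α ^ 2 + 5 * α - 1 = 0)
    (hmax : ∀ t : ℝ, t ^ 3 - 6 * t ^ 2 + 5 * t - 1 = 0 → t ≤ α) :
    IsIntegral ℤ α ∧ 1 < α ∧
    (∀ z : ℂ, z ^ 3 - 6 * z ^ 2 + 5 * z - 1 = 0 → z ≠ (α : ℂ) → ‖z‖ < 1) ∧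
    (∃ u : ℝ, IsIntegral ℤ u ∧ α * u = 1) ∧
    α = b7 ^ 2 ∧
    b7 ^ 3 - 2 * b7 ^ 2 - b7 + 1 = 0 ∧ IsIntegral ℤ b7 ∧ 1 < b7 ∧
    (∀ z : ℂ, z ^ 3 - 2 * z ^ 2 - z + 1 = 0 → z ≠ (b7 : ℂ) → ‖z‖ < 1) := by
  obtain ⟨hb₁, hb₂⟩ := b7_mem_Ioo
  -- Graeffe's root squaring: `f(x) f(-x)` is a polynomial in `x²` for the cubic `f` of `b7`.
  have hsq_root : (b7 ^ 2) ^ 3 - 6 * (b7 ^ 2) ^ 2 + 5 * b7 ^ 2 - 1 = 0 := by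
    linear_combination (b7 ^ 3 + 2 * b7 ^ 2 - b7 - 1) * b7_cubic
  have hαb : α = b7 ^ 2 :=
    eq_of_cubic_eq_zero_of_five_lt hroot hsq_root (by nlinarith [hmax _ hsq_root]) (by nlinarith)
  have hα : 5 < α ∧ α < 5.07 := by constructor <;> nlinarith
  have hα₀ : α ≠ 0 := by linarith
  refine ⟨isIntegral_of_cubic_eq_zero (-6) 5 (-1) (by push_cast; linear_combination hroot),
    by linarith, fun z hz hne => ?_, ⟨α⁻¹, ?_, mul_inv_cancel₀ hα₀⟩, hαb, b7_cubic,
    isIntegral_of_cubic_eq_zero (-2) (-1) 1 (by push_cast; linear_combination b7_cubic),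
    one_lt_b7, fun z hz hne => ?_⟩
  · refine Complex.norm_lt_one_of_cubic_eq_zero_of_ne (p := -6) (q := 5) (r := -1)
      (by linear_combination hroot) (abs_lt.2 ⟨?_, ?_⟩) (abs_lt.2 ⟨?_, ?_⟩)
      (by push_cast; linear_combination hz) hne <;> nlinarith
  · refine isIntegral_of_cubic_eq_zero (-5) 6 (-1) ?_
    field_simp
    push_cast
    linear_combination -hroot
  · refine Complex.norm_lt_one_of_cubic_eq_zero_of_ne (p := -2) (q := -1) (r := 1)
      (by linear_combination b7_cubic) (abs_lt.2 ⟨?_, ?_⟩) (abs_lt.2 ⟨?_, ?_⟩)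
      (by push_cast; linear_combination hz) hne <;> nlinarith
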